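/- Define the potential function F(θ) = R(L_θ) where L_θ = {i ∈ N : r_i ≥ θ} and R(S) = (∑_{i∈S} r_i v_i)/(1 + ∑_{i∈S} v_i). Let F* = sup_{θ≥0} F(θ). Then there exists θ* > 0 such that θ* = F(θ*) = F*, provided F* > 0 (i.e., some item has r_i v_i > 0). -/

import Mathlib

open Finset

/-- MNL expected revenue of an assortment `S`. -/
noncomputable def mnlR {N : Type*} (r v : N → ℝ) (S : Finset N) : ℝ :=
  (∑ i ∈ S, r i * v i) / (1 + ∑ i ∈ S, v i)

/-- The θ-level set: items with revenue at least θ. -/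
noncomputable def levelSet {N : Type*} [Fintype N] (r : N → ℝ) (θ : ℝ) : Finset N :=
  Finset.univ.filter (fun i => θ ≤ r i)

/-- The revenue potential function F(θ) = R(L_θ). -/
noncomputable def potF {N : Type*} [Fintype N] (r v : N → ℝ) (θ : ℝ) : ℝ :=
  mnlR r v (levelSet r θ)

/-- The right limit F(θ⁺) = R({i : r_i > θ}). -/
noncomputable def potFplus {N : Type*} [Fintype N] (r v : N → ℝ) (θ : ℝ) : ℝ :=
  mnlR r v (Finset.univ.filter (fun i => θ < r i))

/-!
Since `F` only takes the finitely many values `R(S)`, it attains its supremum `ρ` on `θ ≥ 0`, and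
`ρ > 0`. For any assortment `S`, `ρ ≤ R(S)` is equivalent to `ρ ≤ ∑_{i ∈ S} (r_i - ρ) v_i`, and the
right-hand side is largest for `S = L_ρ`, which keeps exactly the items with a nonnegative term.
Applied to a maximizing level set this gives `ρ ≤ F(ρ) ≤ ρ`, so `θ* = ρ` is a fixed point.
-/

section

variable {N : Type*} {r v : N → ℝ}

lemma one_add_sum_pos (hv : ∀ i, 0 ≤ v i) (S : Finset N) : 0 < 1 + ∑ i ∈ S, v i := by
  have := sum_nonneg fun i (_ : i ∈ S) => hv i
  linarith

lemma le_mnlR_iff (hv : ∀ i, 0 ≤ v i) (S : Finset N) (ρ : ℝ) :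
    ρ ≤ mnlR r v S ↔ ρ ≤ ∑ i ∈ S, (r i - ρ) * v i := by
  have hsurplus : ∑ i ∈ S, (r i - ρ) * v i = ∑ i ∈ S, r i * v i - ρ * ∑ i ∈ S, v i := by
    rw [mul_sum, ← sum_sub_distrib]
    exact sum_congr rfl fun i _ => by ring
  rw [mnlR, le_div_iff₀ (one_add_sum_pos hv S), hsurplus]
  constructor <;> intro h <;> linarith

variable [Fintype N]

lemma sum_surplus_le_sum_levelSet (hv : ∀ i, 0 ≤ v i) (S : Finset N) (ρ : ℝ) :
    ∑ i ∈ S, (r i - ρ) * v i ≤ ∑ i ∈ levelSet r ρ, (r i - ρ) * v i := by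
  set g : N → ℝ := fun i => if ρ ≤ r i then (r i - ρ) * v i else 0
  have hle : ∀ i, (r i - ρ) * v i ≤ g i := by
    intro i
    by_cases h : ρ ≤ r i
    · simp only [g, if_pos h, le_refl]
    · simp only [g, if_neg h]
      exact mul_nonpos_of_nonpos_of_nonneg (by linarith [not_le.mp h]) (hv i)
  have hg : ∀ i, 0 ≤ g i := fun i => by
    by_cases h : ρ ≤ r i
    · simp only [g, if_pos h]
      exact mul_nonneg (by linarith) (hv i)
    · simp only [g, if_neg h, le_refl]
  calc ∑ i ∈ S, (r i - ρ) * v i ≤ ∑ i ∈ S, g i := sum_le_sum fun i _ => hle i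
    _ ≤ ∑ i, g i := sum_le_sum_of_subset_of_nonneg (subset_univ S) fun i _ _ => hg i
    _ = ∑ i ∈ levelSet r ρ, (r i - ρ) * v i := by rw [levelSet, sum_filter]

lemma le_potF_of_le_mnlR (hv : ∀ i, 0 ≤ v i) {S : Finset N} {ρ : ℝ} (h : ρ ≤ mnlR r v S) :
    ρ ≤ potF r v ρ := by
  rw [le_mnlR_iff hv] at h
  rw [potF, le_mnlR_iff hv]
  exact h.trans (sum_surplus_le_sum_levelSet hv S ρ)

lemma potF_pos_of_mul_pos (hv : ∀ i, 0 ≤ v i) {i₀ : N} (hi₀ : 0 < r i₀ * v i₀) :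
    0 < potF r v (r i₀) := by
  have hr₀ : 0 < r i₀ := pos_of_mul_pos_left hi₀ (hv i₀)
  refine div_pos (sum_pos' (fun i hi => mul_nonneg ?_ (hv i)) ⟨i₀, ?_, hi₀⟩)
    (one_add_sum_pos hv _)
  · exact hr₀.le.trans (mem_filter.mp hi).2
  · simp [levelSet]

lemma exists_isMaxOn_potF (r v : N → ℝ) {s : Set ℝ} (hs : s.Nonempty) :
    ∃ θ₀ ∈ s, IsMaxOn (potF r v) s θ₀ := by
  obtain ⟨_, ⟨θ₀, hθ₀, rfl⟩, hmax⟩ :=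
    Set.exists_max_image (levelSet r '' s) (mnlR r v) (Set.toFinite _) (hs.image _)
  exact ⟨θ₀, hθ₀, fun θ hθ => hmax _ ⟨θ, hθ, rfl⟩⟩

end

theorem stmt1_general {N : Type*} [Fintype N] (r v : N → ℝ)
    (hv : ∀ i, 0 ≤ v i)
    (hpos : ∃ i, 0 < r i * v i) :
    ∃ θstar : ℝ, 0 < θstar ∧ potF r v θstar = θstar ∧
      ∀ θ : ℝ, 0 ≤ θ → potF r v θ ≤ potF r v θstar := by
  obtain ⟨i₀, hi₀⟩ := hpos
  obtain ⟨θ₀, -, hmax⟩ := exists_isMaxOn_potF r v (Set.nonempty_Ici (a := (0 : ℝ)))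
  set ρ := potF r v θ₀
  have hρ : 0 < ρ :=
    (potF_pos_of_mul_pos hv hi₀).trans_le (hmax (pos_of_mul_pos_left hi₀ (hv i₀)).le)
  have hfix : potF r v ρ = ρ := le_antisymm (hmax hρ.le) (le_potF_of_le_mnlR hv le_rfl)
  exact ⟨ρ, hρ, hfix, fun θ hθ => hfix.symm ▸ hmax hθ⟩

/-- there is θ* > 0 with θ* = F(θ*) = F* = sup_{θ ≥ 0} F(θ). -/
theorem stmt1 {N : Type*} [Fintype N] (r v : N → ℝ)
    (hr : ∀ i, 0 ≤ r i ∧ r i ≤ 1) (hv : ∀ i, 0 ≤ v i)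
    (hpos : ∃ i, 0 < r i * v i) :
    ∃ θstar : ℝ, 0 < θstar ∧ potF r v θstar = θstar ∧
      ∀ θ : ℝ, 0 ≤ θ → potF r v θ ≤ potF r v θstar :=
  stmt1_general r v hv hpos
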